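/- arXiv:2410.05545 — 3 statements merged into one kernel-verified Lean document; each statement's English description precedes it below -/
import Mathlib

section
/- For any α, μ, L > 0 with μ ≤ L and any integer E ≥ 1, setting γ = 1/(2E(α+L)), the quantity κ = (α + μ(1 - γ(α+μ))^E)/(α+μ) satisfies κ ≤ 1 - μ/(3(α+L)). -/
lemma aux_pow_bound (n : ℕ) (x : ℝ) (h0 : 0 ≤ x) (h1 : x ≤ 1) :
    (1 - x) ^ n * (1 + n * x) ≤ 1 := by
  induction n with
  | zero => simp
  | succ k ih =>
    have hx : (0:ℝ) ≤ 1 - x := by linarith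
    have hk : (0:ℝ) ≤ (1 - x) ^ k := pow_nonneg hx k
    have hkx : (0:ℝ) ≤ (k:ℝ) * x := by positivity
    push_cast
    rw [pow_succ]
    nlinarith [ih, mul_nonneg hk (mul_nonneg h0 h0), mul_nonneg hk h0,
      mul_nonneg (mul_nonneg hk h0) hkx]

/-- Bound on the FedProx contraction factor for step size `γ = 1/(2E(α+L))`. -/
theorem stmt_5 (α μ L : ℝ) (E : ℕ) (hα : 0 < α) (hμ : 0 < μ) (hμL : μ ≤ L)
    (hE : 1 ≤ E) :
    let γ : ℝ := 1 / (2 * E * (α + L))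
    (α + μ * (1 - γ * (α + μ)) ^ E) / (α + μ) ≤ 1 - μ / (3 * (α + L)) := by
  intro γ
  have hA : (0:ℝ) < α + L := by linarith
  have hB : (0:ℝ) < α + μ := by linarith
  have hBA : α + μ ≤ α + L := by linarith
  have hE' : (1:ℝ) ≤ (E:ℝ) := by exact_mod_cast hE
  have hEpos : (0:ℝ) < (E:ℝ) := by linarith
  set x : ℝ := γ * (α + μ) with hxdef
  have hγ : γ = 1 / (2 * E * (α + L)) := rfl
  have hx0 : 0 ≤ x := by
    have : 0 < γ := by rw [hγ]; positivity
    positivity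
  have hx1 : x ≤ 1 := by
    rw [hxdef, hγ, div_mul_eq_mul_div, one_mul, div_le_one (by positivity)]
    nlinarith
  have hEx : (E:ℝ) * x = (α + μ) / (2 * (α + L)) := by
    rw [hxdef, hγ]
    field_simp
  have key := aux_pow_bound E x hx0 hx1
  set p : ℝ := (1 - x) ^ E with hpdef
  have hp : 0 ≤ p := by
    have : 0 ≤ 1 - x := by linarith
    positivity
  -- from key and hEx : p * (1 + (α+μ)/(2(α+L))) ≤ 1, so p * (2(α+L) + (α+μ)) ≤ 2(α+L)
  have h1 : p * (2 * (α + L) + (α + μ)) ≤ 2 * (α + L) := by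
    have h2 : p * (1 + (α + μ) / (2 * (α + L))) ≤ 1 := by rw [← hEx]; exact key
    have h3 := mul_le_mul_of_nonneg_right h2 (le_of_lt (by positivity : (0:ℝ) < 2 * (α + L)))
    calc p * (2 * (α + L) + (α + μ))
        = p * (1 + (α + μ) / (2 * (α + L))) * (2 * (α + L)) := by
          field_simp
      _ ≤ 1 * (2 * (α + L)) := h3
      _ = 2 * (α + L) := by ring
  have h2 : (1 : ℝ) - μ / (3 * (α + L)) = (3 * (α + L) - μ) / (3 * (α + L)) := by
    field_simp
  rw [h2, div_le_div_iff₀ hB (by positivity)]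
  have t1 : (0:ℝ) < 2 * (α + L) + (α + μ) := by linarith
  have t2 : (0:ℝ) < 3 * (α + L) * μ := by positivity
  have t3 : (0:ℝ) ≤ μ * (α + μ) * ((α + L) - (α + μ)) := by
    apply mul_nonneg (by positivity); linarith
  nlinarith [h1, t1, t2, t3, hp]
end

section
/- For any β ∈ (0,1], μ, L > 0 with μ ≤ L, and integer E ≥ 1, setting γ = 1/(2EL), the quantity κ = 1 - 1/β + (1/β)(1 - βμγ)^E satisfies κ ≤ 1 - μ/(βμ + 2L) ≤ 1 - μ/((β+2)L). -/
/-- Bernoulli-type bound: `(1 + n x)(1 - x)^n ≤ 1` for `x ∈ [0,1]`. -/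
lemma stmt_6_aux (x : ℝ) (hx0 : 0 ≤ x) (hx1 : x ≤ 1) :
    ∀ n : ℕ, (1 + (n : ℝ) * x) * (1 - x) ^ n ≤ 1 := by
  intro n
  induction n with
  | zero => simp
  | succ n ih =>
    have hq : (0 : ℝ) ≤ (1 - x) ^ n := pow_nonneg (by linarith) n
    push_cast
    have hexp : (1 - x) ^ (n + 1) = (1 - x) ^ n * (1 - x) := by ring
    rw [hexp]
    nlinarith [mul_nonneg (mul_nonneg hx0 hx0) hq, mul_nonneg hq hx0]

/-- Bound on our algorithm's contraction factor for step size `γ = 1/(2EL)`. -/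
theorem stmt_6 (β μ L : ℝ) (E : ℕ) (hβ0 : 0 < β) (hβ1 : β ≤ 1)
    (hμ : 0 < μ) (hμL : μ ≤ L) (hE : 1 ≤ E) :
    let γ : ℝ := 1 / (2 * E * L)
    1 - 1 / β + (1 / β) * (1 - β * μ * γ) ^ E ≤ 1 - μ / (β * μ + 2 * L) ∧
    1 - μ / (β * μ + 2 * L) ≤ 1 - μ / ((β + 2) * L) := by
  intro γ
  have hL : 0 < L := lt_of_lt_of_le hμ hμL
  have hE' : (1 : ℝ) ≤ (E : ℝ) := by exact_mod_cast hE
  have hγpos : 0 < γ := by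
    show (0:ℝ) < 1 / (2 * E * L)
    positivity
  set x : ℝ := β * μ * γ with hxdef
  have hx0 : 0 ≤ x := by positivity
  have hx1 : x ≤ 1 := by
    have hγ : γ * (2 * E * L) = 1 := by
      show (1 / (2 * (E:ℝ) * L)) * (2 * E * L) = 1
      field_simp
    have hβμ : β * μ ≤ 2 * (E:ℝ) * L := by nlinarith
    nlinarith [mul_pos (mul_pos two_pos (lt_of_lt_of_le one_pos hE')) hL]
  have hEx : (E : ℝ) * x = β * μ / (2 * L) := by
    have hE0 : (E : ℝ) ≠ 0 := by linarith
    show (E:ℝ) * (β * μ * (1 / (2 * E * L))) = β * μ / (2 * L)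
    field_simp
  have key := stmt_6_aux x hx0 hx1 E
  set p : ℝ := (1 - x) ^ E with hp
  have hp0 : 0 ≤ p := pow_nonneg (by linarith) E
  rw [hEx] at key
  clear_value p
  have hD : 0 < β * μ + 2 * L := by positivity
  have key2 : (β * μ + 2 * L) * p ≤ 2 * L := by
    have h := mul_le_mul_of_nonneg_left key (by positivity : (0:ℝ) ≤ 2 * L)
    have heq : (2 * L) * ((1 + β * μ / (2 * L)) * p) = (β * μ + 2 * L) * p := by
      have hc : 2 * L * (β * μ / (2 * L)) = β * μ := by field_simp
      linear_combination p * hc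
    linarith [heq ▸ h]
  constructor
  · have h1 : μ / (β * μ + 2 * L) ≤ (1 - p) / β := by
      rw [div_le_div_iff₀ hD hβ0]
      nlinarith
    have h2 : (1 - p) / β = 1 / β - (1 / β) * p := by
      field_simp
    linarith [h1, h2.symm ▸ h1]
  · have h3 : μ / ((β + 2) * L) ≤ μ / (β * μ + 2 * L) := by
      apply div_le_div_of_nonneg_left (le_of_lt hμ) hD
      nlinarith
    linarith
end

section
/- Let a = 1 - γ(α+μ) ∈ [0,1), b = αγ ≥ 0 with a + b < 1, and let (D_k) be nonnegative with D_{k+1} ≤ a D_k + b D_0 + c. Then D_E ≤ [(α + μ(1 - γ(α+μ))^E)/(α+μ)] D_0 + cE for every integer E ≥ 1. -/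
/-- Unrolling over one round: `D_E ≤ [(α + μ(1-γ(α+μ))^E)/(α+μ)] D_0 + cE`. -/
theorem stmt_18 (α μ γ c : ℝ) (hα : 0 ≤ α) (hμ : 0 < μ) (hγ : 0 < γ)
    (hγαμ : γ * (α + μ) ≤ 1) (hc : 0 ≤ c)
    (D : ℕ → ℝ) (hD : ∀ k, 0 ≤ D k)
    (hrec : ∀ k, D (k + 1) ≤ (1 - γ * (α + μ)) * D k + α * γ * D 0 + c) :
    ∀ E : ℕ, 1 ≤ E →
      D E ≤ (α + μ * (1 - γ * (α + μ)) ^ E) / (α + μ) * D 0 + c * E := by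
  have hαμ : 0 < α + μ := by linarith
  set a : ℝ := 1 - γ * (α + μ) with ha
  have ha0 : 0 ≤ a := by simp only [ha]; linarith
  have ha1 : a ≤ 1 := by
    have : 0 < γ * (α + μ) := by positivity
    simp only [ha]; linarith
  have hkey : ∀ E : ℕ, a * ((α + μ * a ^ E) / (α + μ)) + α * γ
      = (α + μ * a ^ (E + 1)) / (α + μ) := by
    intro E
    field_simp
    ring_nf
    rw [ha]; ring
  clear_value a
  intro E hE
  induction E with
  | zero => omega
  | succ n ih =>
    rcases Nat.eq_or_lt_of_le hE with h1 | h1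
    · -- n = 0
      have hn : n = 0 := by omega
      subst hn
      have := hrec 0
      have heq : a * D 0 + α * γ * D 0 + c
          = (α + μ * a ^ 1) / (α + μ) * D 0 + c * (1 : ℕ) := by
        push_cast
        rw [pow_one, ha]
        field_simp
        ring
      calc D 1 ≤ a * D 0 + α * γ * D 0 + c := this
        _ = (α + μ * a ^ 1) / (α + μ) * D 0 + c * (1 : ℕ) := heq
    · have hn1 : 1 ≤ n := by omega
      have ihn := ih hn1
      have hD0 : 0 ≤ D 0 := hD 0
      calc D (n + 1) ≤ a * D n + α * γ * D 0 + c := hrec n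
        _ ≤ a * ((α + μ * a ^ n) / (α + μ) * D 0 + c * n) + α * γ * D 0 + c := by
            have := mul_le_mul_of_nonneg_left ihn ha0
            linarith
        _ = (a * ((α + μ * a ^ n) / (α + μ)) + α * γ) * D 0 + a * (c * n) + c := by ring
        _ = (α + μ * a ^ (n + 1)) / (α + μ) * D 0 + a * (c * n) + c := by rw [hkey n]
        _ ≤ (α + μ * a ^ (n + 1)) / (α + μ) * D 0 + c * (n + 1 : ℕ) := by
            have h2 : a * (c * n) ≤ c * n :=
              mul_le_of_le_one_left (by positivity) ha1
            push_cast
            linarith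
end
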